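/- arXiv:1307.1897 — 5 statements merged into one kernel-verified Lean document; each statement's English description precedes it below -/
import Mathlib

section
/- Let (X, δ) be a diversity and let d(x, y) = δ({x, y}) be its induced metric. If (X, d) is a complete (pseudo)metric space, then (X, δ) is a complete diversity: every Cauchy sequence in the diversity sense converges in the diversity sense. -/
/-- A diversity on `X`: a real-valued function on finite subsets of `X` that is
nonnegative, vanishes exactly on sets with at most one element, and satisfies
the triangle inequality `δ(A ∪ B) ≤ δ(A ∪ C) + δ(C ∪ B)` for nonempty `C`. -/
structure Diversity (X : Type*) [DecidableEq X] where
  δ : Finset X → ℝ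
  nonneg : ∀ A : Finset X, 0 ≤ δ A
  eq_zero_iff : ∀ A : Finset X, δ A = 0 ↔ A.card ≤ 1
  triangle : ∀ A B C : Finset X, C.Nonempty → δ (A ∪ B) ≤ δ (A ∪ C) + δ (C ∪ B)

/-- A sequence `x` converges to `p` in the diversity sense: for every `ε > 0`
there is `N` such that `δ({p} ∪ {x_{i₁}, …, x_{iₙ}}) < ε` for all finite sets of
indices `i₁, …, iₙ ≥ N`. -/
def DivTendsto {X : Type*} [DecidableEq X] (δ : Finset X → ℝ) (x : ℕ → X) (p : X) : Prop :=
  ∀ ε > (0 : ℝ), ∃ N : ℕ, ∀ I : Finset ℕ, (∀ i ∈ I, N ≤ i) →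
    δ (insert p (I.image x)) < ε

/-- A sequence `x` is Cauchy in the diversity sense: for every `ε > 0` there is
`N` such that `δ({x_{i₁}, …, x_{iₙ}}) < ε` for all finite sets of indices
`i₁, …, iₙ ≥ N`. -/
def DivCauchy {X : Type*} [DecidableEq X] (δ : Finset X → ℝ) (x : ℕ → X) : Prop :=
  ∀ ε > (0 : ℝ), ∃ N : ℕ, ∀ I : Finset ℕ, (∀ i ∈ I, N ≤ i) →
    δ (I.image x) < ε

/-- A sequence is Cauchy with respect to the induced metric
`d(x, y) = δ({x, y})`. -/
def MetCauchy {X : Type*} [DecidableEq X] (δ : Finset X → ℝ) (x : ℕ → X) : Prop :=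
  ∀ ε > (0 : ℝ), ∃ N : ℕ, ∀ m ≥ N, ∀ n ≥ N, δ {x m, x n} < ε

/-- A sequence converges to `p` with respect to the induced metric
`d(x, y) = δ({x, y})`. -/
def MetTendsto {X : Type*} [DecidableEq X] (δ : Finset X → ℝ) (x : ℕ → X) (p : X) : Prop :=
  ∀ ε > (0 : ℝ), ∃ N : ℕ, ∀ n ≥ N, δ {p, x n} < ε

/-!
A diversity-Cauchy sequence is Cauchy for the induced metric, so it has a metric limit `p`.
For a nonempty set `A` of late terms and any `a ∈ A`, the triangle inequality with `C = {a}` gives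
`δ({p} ∪ A) ≤ δ{p, a} + δ(A)`; both terms are small, the first by metric convergence and the
second by the diversity Cauchy condition.
-/

theorem DivCauchy.metCauchy {X : Type*} [DecidableEq X] {δ : Finset X → ℝ} {x : ℕ → X}
    (hx : DivCauchy δ x) : MetCauchy δ x := by
  intro ε hε
  obtain ⟨N, hN⟩ := hx ε hε
  refine ⟨N, fun m hm n hn => ?_⟩
  have hmn : ∀ i ∈ ({m, n} : Finset ℕ), N ≤ i := by
    simp only [Finset.mem_insert, Finset.mem_singleton]
    rintro i (rfl | rfl) <;> assumption
  simpa [Finset.image_insert] using hN {m, n} hmn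

namespace Diversity

variable {X : Type*} [DecidableEq X] (D : Diversity X)

theorem δ_singleton (p : X) : D.δ {p} = 0 :=
  (D.eq_zero_iff {p}).2 (Finset.card_singleton p).le

theorem δ_insert_le_of_mem (p : X) {A : Finset X} {a : X} (ha : a ∈ A) :
    D.δ (insert p A) ≤ D.δ {p, a} + D.δ A := by
  have h := D.triangle {p} A {a} ⟨a, Finset.mem_singleton_self a⟩
  rwa [Finset.singleton_union, Finset.singleton_union, Finset.union_eq_right.2
    (Finset.singleton_subset_iff.2 ha)] at h

theorem divTendsto_of_metTendsto {x : ℕ → X} {p : X} (hx : DivCauchy D.δ x)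
    (hp : MetTendsto D.δ x p) : DivTendsto D.δ x p := by
  intro ε hε
  obtain ⟨N₁, hN₁⟩ := hx (ε / 2) (half_pos hε)
  obtain ⟨N₂, hN₂⟩ := hp (ε / 2) (half_pos hε)
  refine ⟨max N₁ N₂, fun I hI => ?_⟩
  rcases I.eq_empty_or_nonempty with rfl | ⟨i, hi⟩
  · simpa [D.δ_singleton] using hε
  · have hpi : D.δ {p, x i} < ε / 2 := hN₂ i ((le_max_right _ _).trans (hI i hi))
    have hI' : D.δ (I.image x) < ε / 2 := hN₁ I fun j hj => (le_max_left _ _).trans (hI j hj)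
    calc D.δ (insert p (I.image x)) ≤ D.δ {p, x i} + D.δ (I.image x) :=
          D.δ_insert_le_of_mem p (Finset.mem_image_of_mem x hi)
      _ < ε := by linarith

end Diversity

/-- If the induced metric of a diversity is complete, then the diversity is
complete: every Cauchy sequence in the diversity sense converges in the
diversity sense. -/
theorem complete_of_inducedMetric_complete {X : Type*} [DecidableEq X]
    (D : Diversity X)
    (hmet : ∀ x : ℕ → X, MetCauchy D.δ x → ∃ p, MetTendsto D.δ x p) :
    ∀ x : ℕ → X, DivCauchy D.δ x → ∃ p, DivTendsto D.δ x p := by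
  intro x hx
  obtain ⟨p, hp⟩ := hmet x hx.metCauchy
  exact ⟨p, D.divTendsto_of_metTendsto hx hp⟩
end

section
/- Let (X, δ) be a diversity and let d(x, y) = δ({x, y}) be its induced metric. Every sequence in X that is Cauchy with respect to the metric d has a subsequence that is Cauchy with respect to the diversity δ. -/
/-! Pass to a subsequence whose consecutive distances are bounded by `2⁻ᵏ`. By the triangle
inequality the diversity of a block `y m, …, y n` is at most the sum of its consecutive distances,
and by monotonicity every finite set of late terms lies in such a block, so its diversity is
bounded by a tail of a convergent series. -/

namespace Diversity

variable {X : Type*} [DecidableEq X] (D : Diversity X)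

theorem le_insert (A : Finset X) (c : X) : D.δ A ≤ D.δ (insert c A) := by
  have h := D.triangle A ∅ {c} (Finset.singleton_nonempty c)
  have hc : D.δ ({c} ∪ ∅) = 0 := (D.eq_zero_iff _).2 (by simp)
  rwa [Finset.union_empty, hc, add_zero, Finset.union_singleton] at h

theorem mono {A B : Finset X} (h : A ⊆ B) : D.δ A ≤ D.δ B := by
  rw [← Finset.union_sdiff_of_subset h]
  induction B \ A using Finset.induction_on with
  | empty => simp
  | @insert c C _ ih => exact ih.trans (by rw [Finset.union_insert]; exact D.le_insert _ c)

theorem insert_le_add {A : Finset X} {a : X} (ha : a ∈ A) (b : X) :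
    D.δ (insert b A) ≤ D.δ A + D.δ {a, b} := by
  have h := D.triangle A {b} {a} (Finset.singleton_nonempty a)
  rwa [Finset.union_singleton, Finset.union_singleton, Finset.insert_eq_of_mem ha,
    Finset.singleton_union] at h

theorem image_Icc_le_sum (y : ℕ → X) {m n : ℕ} (hmn : m ≤ n) :
    D.δ ((Finset.Icc m n).image y) ≤ ∑ k ∈ Finset.Ico m n, D.δ {y k, y (k + 1)} := by
  induction n, hmn using Nat.le_induction with
  | base => simp [(D.eq_zero_iff _).2]
  | succ n hmn ih =>
    have hIcc : Finset.Icc m (n + 1) = insert (n + 1) (Finset.Icc m n) := by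
      ext k
      simp only [Finset.mem_Icc, Finset.mem_insert]
      omega
    calc D.δ ((Finset.Icc m (n + 1)).image y)
        ≤ D.δ ((Finset.Icc m n).image y) + D.δ {y n, y (n + 1)} := by
          rw [hIcc, Finset.image_insert]
          exact D.insert_le_add (Finset.mem_image_of_mem y (by simp [hmn])) _
      _ ≤ ∑ k ∈ Finset.Ico m (n + 1), D.δ {y k, y (k + 1)} := by
          rw [Finset.sum_Ico_succ_top (by omega)]
          gcongr

theorem divCauchy_of_summable {y : ℕ → X} {u : ℕ → ℝ} (hu : Summable u)
    (hyu : ∀ k, D.δ {y k, y (k + 1)} ≤ u k) : DivCauchy D.δ y := by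
  intro ε hε
  obtain ⟨s, hs⟩ := summable_iff_vanishing_norm.1 hu ε hε
  refine ⟨s.sup id + 1, fun I hI => ?_⟩
  set N := s.sup id + 1
  set M := max N (I.sup id)
  have hIM : I ⊆ Finset.Icc N M := fun i hi =>
    Finset.mem_Icc.2 ⟨hI i hi, le_max_of_le_right (Finset.le_sup (f := id) hi)⟩
  have hdisj : Disjoint (Finset.Ico N M) s := by
    refine Finset.disjoint_left.2 fun k hk hks => ?_
    have := Finset.le_sup (f := id) hks
    simp only [Finset.mem_Ico, id] at hk this
    omega
  calc D.δ (I.image y) ≤ D.δ ((Finset.Icc N M).image y) :=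
        D.mono (Finset.image_subset_image hIM)
    _ ≤ ∑ k ∈ Finset.Ico N M, D.δ {y k, y (k + 1)} := D.image_Icc_le_sum y (le_max_left _ _)
    _ ≤ ∑ k ∈ Finset.Ico N M, u k := Finset.sum_le_sum fun k _ => hyu k
    _ ≤ ‖∑ k ∈ Finset.Ico N M, u k‖ := Real.le_norm_self _
    _ < ε := hs _ hdisj

end Diversity

theorem MetCauchy.exists_strictMono_pair_lt {X : Type*} [DecidableEq X] {δ : Finset X → ℝ}
    {x : ℕ → X} (hx : MetCauchy δ x) {ε : ℕ → ℝ} (hε : ∀ k, 0 < ε k) :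
    ∃ φ : ℕ → ℕ, StrictMono φ ∧ ∀ k, δ {x (φ k), x (φ (k + 1))} < ε k := by
  obtain ⟨φ, hφ, hφε⟩ := Filter.extraction_forall_of_eventually'
    (P := fun k j => ∀ m ≥ j, ∀ n ≥ j, δ {x m, x n} < ε k) fun k => by
      obtain ⟨N, hN⟩ := hx (ε k) (hε k)
      exact ⟨N, fun j hj m hm n hn => hN m (hj.trans hm) n (hj.trans hn)⟩
  exact ⟨φ, hφ, fun k => hφε k _ le_rfl _ (hφ k.lt_succ_self).le⟩

/-- Every sequence that is Cauchy with respect to the induced metric of a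
diversity has a subsequence that is Cauchy with respect to the diversity. -/
theorem exists_divCauchy_subseq_of_metCauchy {X : Type*} [DecidableEq X]
    (D : Diversity X) (x : ℕ → X) (hx : MetCauchy D.δ x) :
    ∃ φ : ℕ → ℕ, StrictMono φ ∧ DivCauchy D.δ (x ∘ φ) := by
  obtain ⟨φ, hφ, hφx⟩ := hx.exists_strictMono_pair_lt fun k => pow_pos (one_half_pos (α := ℝ)) k
  exact ⟨φ, hφ, D.divCauchy_of_summable summable_geometric_two fun k => (hφx k).le⟩
end

section
/- Let (X, δ) be a diversity and let π : X → X̂ be an embedding into a complete diversity (X̂, δ̂) whose image is dense (every point of X̂ is the limit of a sequence of points of π(X)). Then for every complete diversity (Y, γ) and every uniformly continuous function f : X → Y there exists a unique uniformly continuous function f̂ : X̂ → Y with f̂ ∘ π = f. -/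
/-- A function between diversities is uniformly continuous if for every
`ε > 0` there is `d > 0` such that `δ_X(A) < d` implies `δ_Y(f(A)) < ε` for
every finite `A ⊆ X`. -/
def DivUniformContinuous {X Y : Type*} [DecidableEq X] [DecidableEq Y]
    (δX : Finset X → ℝ) (δY : Finset Y → ℝ) (f : X → Y) : Prop :=
  ∀ ε > (0 : ℝ), ∃ d > (0 : ℝ), ∀ A : Finset X, δX A < d → δY (A.image f) < ε

/-- A diversity is complete if every Cauchy sequence converges. -/
def DivComplete {X : Type*} [DecidableEq X] (δ : Finset X → ℝ) : Prop :=
  ∀ x : ℕ → X, DivCauchy δ x → ∃ p, DivTendsto δ x p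


/-! The extension is `f̂ p := lim f (xₙ)` for any sequence `π (xₙ) → p`: uniform continuity of
`f` makes `(f xₙ)` Cauchy in `Y`, and limits are unique. Uniform continuity of `f̂`
comes from moving each point of a finite `A ⊆ X̂` to a nearby `π (xₙ)` and each `f̂ p` to the
nearby `f (xₙ)`; by the triangle inequality each move costs at most its own diversity, so the
total cost is at most `|A|` times a bound that can be chosen as small as we like. -/

open Filter Finset

section General

variable {X Y : Type*} [DecidableEq X] [DecidableEq Y]

theorem DivTendsto.eventually_pair_lt {δ : Finset X → ℝ} {x : ℕ → X} {p : X}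
    (h : DivTendsto δ x p) {ε : ℝ} (hε : 0 < ε) : ∀ᶠ n in atTop, δ {p, x n} < ε := by
  obtain ⟨N, hN⟩ := h ε hε
  filter_upwards [eventually_ge_atTop N] with n hn
  simpa using hN {n} (by simpa using hn)

theorem DivUniformContinuous.divTendsto_comp {δX : Finset X → ℝ} {δY : Finset Y → ℝ}
    {f : X → Y} (hf : DivUniformContinuous δX δY f) {x : ℕ → X} {p : X}
    (hx : DivTendsto δX x p) : DivTendsto δY (f ∘ x) (f p) := by
  intro ε hε
  obtain ⟨d, hd, hfd⟩ := hf ε hε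
  obtain ⟨N, hN⟩ := hx d hd
  refine ⟨N, fun I hI => ?_⟩
  simpa [image_insert, image_image] using hfd _ (hN I hI)

theorem DivUniformContinuous.divCauchy_comp {δX : Finset X → ℝ} {δY : Finset Y → ℝ}
    {f : X → Y} (hf : DivUniformContinuous δX δY f) {x : ℕ → X}
    (hx : DivCauchy δX x) : DivCauchy δY (f ∘ x) := by
  intro ε hε
  obtain ⟨d, hd, hfd⟩ := hf ε hε
  obtain ⟨N, hN⟩ := hx d hd
  refine ⟨N, fun I hI => ?_⟩
  simpa [image_image] using hfd _ (hN I hI)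

theorem DivTendsto.of_comp_embedding {δX : Finset X → ℝ} {δY : Finset Y → ℝ} {π : X → Y}
    (hemb : ∀ A : Finset X, δX A = δY (A.image π)) {x : ℕ → X} {a : X}
    (h : DivTendsto δY (π ∘ x) (π a)) : DivTendsto δX x a := by
  intro ε hε
  obtain ⟨N, hN⟩ := h ε hε
  refine ⟨N, fun I hI => ?_⟩
  simpa [hemb, image_insert, image_image] using hN I hI

theorem DivCauchy.of_comp_embedding {δX : Finset X → ℝ} {δY : Finset Y → ℝ} {π : X → Y}
    (hemb : ∀ A : Finset X, δX A = δY (A.image π)) {x : ℕ → X}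
    (h : DivCauchy δY (π ∘ x)) : DivCauchy δX x := by
  intro ε hε
  obtain ⟨N, hN⟩ := h ε hε
  refine ⟨N, fun I hI => ?_⟩
  simpa [hemb, image_image] using hN I hI

end General

namespace Diversity

variable {Z : Type*} [DecidableEq Z] (D : Diversity Z)

theorem δ_le_δ_insert (c : Z) (S : Finset Z) : D.δ S ≤ D.δ (insert c S) := by
  rcases S.eq_empty_or_nonempty with rfl | -
  · rw [(D.eq_zero_iff ∅).mpr (by simp)]
    exact D.nonneg _
  · have h := D.triangle S ∅ {c} (singleton_nonempty c)
    rw [union_empty, union_empty, (D.eq_zero_iff {c}).mpr (by simp), add_zero,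
      union_comm, ← insert_eq] at h
    exact h

theorem δ_pair_le (a b c : Z) : D.δ {a, b} ≤ D.δ {a, c} + D.δ {c, b} :=
  D.triangle {a} {b} {c} (singleton_nonempty c)

theorem δ_image_union_le {P : Type*} [DecidableEq P] (g h : P → Z) (S : Finset P)
    (T : Finset Z) :
    D.δ (S.image h ∪ T) ≤ D.δ (S.image g ∪ T) + ∑ p ∈ S, D.δ {g p, h p} := by
  induction S using Finset.induction_on generalizing T with
  | empty => simp
  | @insert a S ha ih =>
    rw [image_insert, image_insert, sum_insert ha, insert_union, insert_union]
    have hmove : D.δ (insert (h a) (S.image h ∪ T))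
        ≤ D.δ {g a, h a} + D.δ (insert (g a) (S.image h ∪ T)) := by
      convert D.triangle {h a} (S.image h ∪ T) {g a} (singleton_nonempty _) using 3 <;>
        ext <;> simp [or_comm]
    have hrest : D.δ (insert (g a) (S.image h ∪ T))
        ≤ D.δ (insert (g a) (S.image g ∪ T)) + ∑ p ∈ S, D.δ {g p, h p} := by
      simpa only [union_insert] using ih (insert (g a) T)
    linarith

theorem δ_image_le_of_forall_le {P : Type*} [DecidableEq P] {g h : P → Z} {S : Finset P}
    {η : ℝ} (hgh : ∀ p ∈ S, D.δ {g p, h p} ≤ η) :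
    D.δ (S.image h) ≤ D.δ (S.image g) + S.card * η := by
  have := D.δ_image_union_le g h S ∅
  rw [union_empty, union_empty] at this
  have hsum : ∑ p ∈ S, D.δ {g p, h p} ≤ S.card * η := by
    simpa [nsmul_eq_mul] using sum_le_card_nsmul S _ η hgh
  linarith

theorem divCauchy_of_divTendsto {x : ℕ → Z} {p : Z} (h : DivTendsto D.δ x p) :
    DivCauchy D.δ x := by
  intro ε hε
  obtain ⟨N, hN⟩ := h ε hε
  exact ⟨N, fun I hI => (D.δ_le_δ_insert p _).trans_lt (hN I hI)⟩

theorem divTendsto_unique {x : ℕ → Z} {p q : Z} (hp : DivTendsto D.δ x p)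
    (hq : DivTendsto D.δ x q) : p = q := by
  have hzero : D.δ {p, q} = 0 := by
    refine le_antisymm (le_of_forall_pos_lt_add fun ε hε => ?_) (D.nonneg _)
    obtain ⟨n, hpn, hqn⟩ :=
      ((hp.eventually_pair_lt (half_pos hε)).and (hq.eventually_pair_lt (half_pos hε))).exists
    have := D.δ_pair_le p q (x n)
    rw [pair_comm (x n)] at this
    linarith
  rw [D.eq_zero_iff, card_le_one] at hzero
  exact hzero p (by simp) q (by simp)

end Diversity

theorem DivUniformContinuous.of_limits {X Xh Y : Type*} [DecidableEq X] [DecidableEq Xh]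
    [DecidableEq Y] {δX : Finset X → ℝ} (Dh : Diversity Xh) (G : Diversity Y) {π : X → Xh}
    (hemb : ∀ A : Finset X, δX A = Dh.δ (A.image π)) {f : X → Y}
    (hf : DivUniformContinuous δX G.δ f) {fh : Xh → Y} (seq : Xh → ℕ → X)
    (hseq : ∀ p, DivTendsto Dh.δ (π ∘ seq p) p) (hfh : ∀ p, DivTendsto G.δ (f ∘ seq p) (fh p)) :
    DivUniformContinuous Dh.δ G.δ fh := by
  intro ε hε
  obtain ⟨d, hd, hfd⟩ := hf (ε / 2) (half_pos hε)
  refine ⟨d / 2, half_pos hd, fun A hA => ?_⟩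
  have small : ∀ r > (0 : ℝ), ∃ η > 0, (A.card : ℝ) * η < r := fun r hr =>
    ⟨r / (A.card + 1), by positivity, by
      rw [mul_div_assoc', div_lt_iff₀ (by positivity)]; nlinarith⟩
  obtain ⟨η, hη, hηA⟩ := small (d / 2) (half_pos hd)
  obtain ⟨θ, hθ, hθA⟩ := small (ε / 2) (half_pos hε)
  have hnear : ∀ p, ∃ m, Dh.δ {p, π (seq p m)} < η ∧ G.δ {fh p, f (seq p m)} < θ := fun p =>
    (((hseq p).eventually_pair_lt hη).and ((hfh p).eventually_pair_lt hθ)).exists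
  choose m hm using hnear
  set b : Xh → X := fun p => seq p (m p)
  have hb : δX (A.image b) < d := by
    have := Dh.δ_image_le_of_forall_le (g := id) (h := π ∘ b) (S := A)
      fun p _ => (hm p).1.le
    rw [image_id] at this
    rw [hemb, image_image]
    linarith
  have := G.δ_image_le_of_forall_le (g := f ∘ b) (h := fh) (S := A)
    fun p _ => by rw [pair_comm]; exact (hm p).2.le
  have := hfd _ hb
  rw [image_image] at this
  linarith

theorem completion_universal_property_general {X Xh Y : Type*}
    [DecidableEq X] [DecidableEq Xh] [DecidableEq Y]
    (D : Diversity X) (Dh : Diversity Xh) (G : Diversity Y)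
    (π : X → Xh)
    (hemb : ∀ A : Finset X, D.δ A = Dh.δ (A.image π))
    (hdense : ∀ p : Xh, ∃ x : ℕ → X, DivTendsto Dh.δ (fun n => π (x n)) p)
    (hYcomplete : DivComplete G.δ)
    (f : X → Y) (hf : DivUniformContinuous D.δ G.δ f) :
    ∃! fh : Xh → Y, DivUniformContinuous Dh.δ G.δ fh ∧ fh ∘ π = f := by
  choose seq hseq using hdense
  have hcauchy p : DivCauchy G.δ (f ∘ seq p) :=
    hf.divCauchy_comp (.of_comp_embedding hemb (Dh.divCauchy_of_divTendsto (hseq p)))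
  choose fh hfh using fun p => hYcomplete _ (hcauchy p)
  have hcomp : fh ∘ π = f := funext fun a =>
    G.divTendsto_unique (hfh (π a)) (hf.divTendsto_comp (.of_comp_embedding hemb (hseq (π a))))
  refine ⟨fh, ⟨.of_limits Dh G hemb hf seq hseq hfh, hcomp⟩, fun g ⟨hg, hgπ⟩ => funext fun p => ?_⟩
  have hlim : DivTendsto G.δ ((g ∘ π) ∘ seq p) (g p) := hg.divTendsto_comp (hseq p)
  rw [hgπ] at hlim
  exact G.divTendsto_unique hlim (hfh p)

/-- Universal property of the completion: if `π : X → X̂` is an embedding of a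
diversity into a complete diversity with dense image, then every uniformly
continuous map `f` from `X` into a complete diversity `Y` extends uniquely to
a uniformly continuous map `f̂ : X̂ → Y` with `f̂ ∘ π = f`. -/
theorem completion_universal_property {X Xh Y : Type*}
    [DecidableEq X] [DecidableEq Xh] [DecidableEq Y]
    (D : Diversity X) (Dh : Diversity Xh) (G : Diversity Y)
    (π : X → Xh) (hinj : Function.Injective π)
    (hemb : ∀ A : Finset X, D.δ A = Dh.δ (A.image π))
    (hXhcomplete : DivComplete Dh.δ)
    (hdense : ∀ p : Xh, ∃ x : ℕ → X, DivTendsto Dh.δ (fun n => π (x n)) p)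
    (hYcomplete : DivComplete G.δ)
    (f : X → Y) (hf : DivUniformContinuous D.δ G.δ f) :
    ∃! fh : Xh → Y, DivUniformContinuous Dh.δ G.δ fh ∧ fh ∘ π = f :=
  completion_universal_property_general D Dh G π hemb hdense hYcomplete f hf
end

section
/- Let (X, 𝒞) be a conformity with a countable base. Then 𝒞 has a countable base {C_n}_{n≥0} with C_0 = P_fin(X) and C_i ∘ C_i ∘ C_i ⊆ C_{i−1} for all i > 0. -/
/-- Composition of collections of finite sets:
`U ∘ V = { u ∪ v : u ∈ U, v ∈ V, u ∩ v ≠ ∅ }`. -/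
def SetComp {X : Type*} [DecidableEq X] (U V : Set (Finset X)) : Set (Finset X) :=
  {w | ∃ u ∈ U, ∃ v ∈ V, (u ∩ v).Nonempty ∧ w = u ∪ v}

/-- A conformity on `X`: a filter `𝒞` of subsets of the finite power set of `X`
(closed under finite intersections and supersets, not containing `∅`) such that
(C1) every member contains all singletons, (C2) every member is downward
closed, and (C3) for every `C ∈ 𝒞` there is `D ∈ 𝒞` with `D ∘ D ⊆ C`. -/
structure Conformity (X : Type*) [DecidableEq X] where
  sets : Set (Set (Finset X))
  univ_mem : Set.univ ∈ sets
  superset_mem : ∀ {C D : Set (Finset X)}, C ∈ sets → C ⊆ D → D ∈ sets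
  inter_mem : ∀ {C D : Set (Finset X)}, C ∈ sets → D ∈ sets → C ∩ D ∈ sets
  empty_not_mem : ∅ ∉ sets
  singleton_mem : ∀ {C : Set (Finset X)}, C ∈ sets → ∀ x : X, ({x} : Finset X) ∈ C
  down_closed : ∀ {C : Set (Finset X)}, C ∈ sets →
    ∀ {A B : Finset X}, A ∈ C → B ⊆ A → B ∈ C
  comp_mem : ∀ {C : Set (Finset X)}, C ∈ sets → ∃ D ∈ sets, SetComp D D ⊆ C

/-- A countable base for a conformity: a countable family of members of the
filter such that every member of the filter contains one of them. -/
def Conformity.HasCountableBase {X : Type*} [DecidableEq X] (𝒞 : Conformity X) : Prop :=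
  ∃ B : ℕ → Set (Finset X), (∀ n, B n ∈ 𝒞.sets) ∧ ∀ C ∈ 𝒞.sets, ∃ n, B n ⊆ C

/-!
Refine a countable base `B` recursively: `C 0` is everything, and `C (n + 1)` is a member of
`𝒞` whose triple composite lies in `C n ∩ B n`; it exists by applying (C3) twice. Then
`C (n + 1) ⊆ B n`, so the `C n` again form a base.
-/

section

variable {X : Type*} [DecidableEq X]

lemma setComp_mono {U U' V V' : Set (Finset X)} (hU : U ⊆ U') (hV : V ⊆ V') :
    SetComp U V ⊆ SetComp U' V' := by
  rintro w ⟨u, hu, v, hv, huv, rfl⟩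
  exact ⟨u, hU hu, v, hV hv, huv, rfl⟩

namespace Conformity

variable (𝒞 : Conformity X)

lemma exists_mem_subset_and_setComp_three_subset {C : Set (Finset X)} (hC : C ∈ 𝒞.sets) :
    ∃ D ∈ 𝒞.sets, D ⊆ C ∧ SetComp (SetComp D D) D ⊆ C := by
  obtain ⟨D, hD, hDC⟩ := 𝒞.comp_mem hC
  obtain ⟨E, hE, hED⟩ := 𝒞.comp_mem hD
  have hFE : E ∩ D ∩ C ⊆ E := fun _ hx => hx.1.1
  have hFD : E ∩ D ∩ C ⊆ D := fun _ hx => hx.1.2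
  refine ⟨E ∩ D ∩ C, 𝒞.inter_mem (𝒞.inter_mem hE hD) hC, Set.inter_subset_right, ?_⟩
  calc SetComp (SetComp (E ∩ D ∩ C) (E ∩ D ∩ C)) (E ∩ D ∩ C)
      ⊆ SetComp (SetComp E E) D := setComp_mono (setComp_mono hFE hFE) hFD
    _ ⊆ SetComp D D := setComp_mono hED subset_rfl
    _ ⊆ C := hDC

noncomputable def refineSeq {B : ℕ → Set (Finset X)} (hB : ∀ n, B n ∈ 𝒞.sets) :
    ℕ → {C : Set (Finset X) // C ∈ 𝒞.sets}
  | 0 => ⟨Set.univ, 𝒞.univ_mem⟩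
  | n + 1 =>
    let h := 𝒞.exists_mem_subset_and_setComp_three_subset
      (𝒞.inter_mem (refineSeq hB n).2 (hB n))
    ⟨h.choose, h.choose_spec.1⟩

variable {𝒞} {B : ℕ → Set (Finset X)} (hB : ∀ n, B n ∈ 𝒞.sets)

lemma refineSeq_succ_spec (n : ℕ) :
    (𝒞.refineSeq hB (n + 1)).1 ⊆ (𝒞.refineSeq hB n).1 ∩ B n ∧
      SetComp (SetComp (𝒞.refineSeq hB (n + 1)).1 (𝒞.refineSeq hB (n + 1)).1)
        (𝒞.refineSeq hB (n + 1)).1 ⊆ (𝒞.refineSeq hB n).1 ∩ B n :=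
  (𝒞.exists_mem_subset_and_setComp_three_subset
    (𝒞.inter_mem (𝒞.refineSeq hB n).2 (hB n))).choose_spec.2

end Conformity

end

/-- A conformity with a countable base has a countable base `{C_n}` with
`C₀ = P_fin(X)` and `C_i ∘ C_i ∘ C_i ⊆ C_{i−1}` for all `i > 0`. -/
theorem exists_nice_countable_base {X : Type*} [DecidableEq X] (𝒞 : Conformity X)
    (h : 𝒞.HasCountableBase) :
    ∃ C : ℕ → Set (Finset X),
      (∀ n, C n ∈ 𝒞.sets) ∧
      (∀ u ∈ 𝒞.sets, ∃ n, C n ⊆ u) ∧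
      C 0 = Set.univ ∧
      ∀ i : ℕ, 0 < i → SetComp (SetComp (C i) (C i)) (C i) ⊆ C (i - 1) := by
  obtain ⟨B, hB, hB_base⟩ := h
  refine ⟨fun n => (𝒞.refineSeq hB n).1, fun n => (𝒞.refineSeq hB n).2, ?_, rfl, ?_⟩
  · intro u hu
    obtain ⟨n, hBu⟩ := hB_base u hu
    exact ⟨n + 1, fun _ hx => hBu ((Conformity.refineSeq_succ_spec hB n).1 hx).2⟩
  · rintro (_ | n) hn
    · exact absurd hn (lt_irrefl 0)
    · exact fun _ hx => ((Conformity.refineSeq_succ_spec hB n).2 hx).1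
end

section
/- Let δ be a pseudodiversity on X and let 𝒞 be the conformity generated by δ. Then (X, δ) is a complete pseudodiversity (every Cauchy sequence converges) if and only if (X, 𝒞) is a complete conformity (every Cauchy filter converges). -/
/-- A pseudodiversity on `X`: a real-valued function on finite subsets of `X`
that is nonnegative, vanishes on sets with at most one element, and satisfies
the triangle inequality `δ(A ∪ B) ≤ δ(A ∪ C) + δ(C ∪ B)` for nonempty `C`. -/
structure Pseudodiversity (X : Type*) [DecidableEq X] where
  δ : Finset X → ℝ
  nonneg : ∀ A : Finset X, 0 ≤ δ A
  eq_zero_of_card_le : ∀ A : Finset X, A.card ≤ 1 → δ A = 0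
  triangle : ∀ A B C : Finset X, C.Nonempty → δ (A ∪ B) ≤ δ (A ∪ C) + δ (C ∪ B)

/-- The conformity generated by a pseudodiversity `δ`: the filter on the
finite power set of `X` generated by the sets `{A : δ(A) ≤ ε}`, `ε > 0`. -/
def genConf {X : Type*} [DecidableEq X] (δ : Finset X → ℝ) : Set (Set (Finset X)) :=
  {C | ∃ ε > (0 : ℝ), {A : Finset X | δ A ≤ ε} ⊆ C}

/-- A filter `F` on `X` is Cauchy with respect to a conformity when for every
member `C` of the conformity there is `f ∈ F` with `P_fin(f) ⊆ C`. -/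
def ConfCauchyFilter {X : Type*} (𝒞 : Set (Set (Finset X))) (F : Filter X) : Prop :=
  ∀ C ∈ 𝒞, ∃ f ∈ F, {A : Finset X | ↑A ⊆ f} ⊆ C

/-- A filter `F` on `X` converges to `x` with respect to a conformity when for
every member `C` of the conformity there is `f ∈ F` with
`P_fin(f) ⊆ {A : A ∪ {x} ∈ C}`. -/
def ConfFilterTendsto {X : Type*} [DecidableEq X] (𝒞 : Set (Set (Finset X)))
    (F : Filter X) (x : X) : Prop :=
  ∀ C ∈ 𝒞, ∃ f ∈ F, ∀ A : Finset X, ↑A ⊆ f → insert x A ∈ C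

/-!
A Cauchy sequence has a Cauchy tail filter, and a limit of that filter is a limit of the sequence.
Conversely, a Cauchy filter contains a decreasing sequence of sets whose finite subsets have
arbitrarily small diversity; one point from each set gives a Cauchy sequence, and the triangle
inequality through a far-out term of that sequence turns its limit into a limit of the filter.
-/

open Filter Set

section GeneratedConformity

variable {X : Type*} [DecidableEq X] {δ : Finset X → ℝ}

theorem confCauchyFilter_genConf_iff {F : Filter X} :
    ConfCauchyFilter (genConf δ) F ↔ ∀ ε > 0, ∃ f ∈ F, ∀ A : Finset X, ↑A ⊆ f → δ A ≤ ε := by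
  refine ⟨fun h ε hε => ?_, fun h C ⟨ε, hε, hC⟩ => ?_⟩
  · obtain ⟨f, hf, hfA⟩ := h _ ⟨ε, hε, subset_rfl⟩
    exact ⟨f, hf, fun A hA => hfA hA⟩
  · obtain ⟨f, hf, hfA⟩ := h ε hε
    exact ⟨f, hf, fun A hA => hC (hfA A hA)⟩

theorem confFilterTendsto_genConf_iff {F : Filter X} {p : X} :
    ConfFilterTendsto (genConf δ) F p ↔
      ∀ ε > 0, ∃ f ∈ F, ∀ A : Finset X, ↑A ⊆ f → δ (insert p A) ≤ ε := by
  refine ⟨fun h ε hε => h _ ⟨ε, hε, subset_rfl⟩, fun h C ⟨ε, hε, hC⟩ => ?_⟩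
  obtain ⟨f, hf, hfA⟩ := h ε hε
  exact ⟨f, hf, fun A hA => hC (hfA A hA)⟩

theorem DivCauchy.confCauchyFilter_map {x : ℕ → X} (hx : DivCauchy δ x) :
    ConfCauchyFilter (genConf δ) (map x atTop) := by
  refine confCauchyFilter_genConf_iff.2 fun ε hε => ?_
  obtain ⟨N, hN⟩ := hx ε hε
  refine ⟨x '' Ici N, image_mem_map (Ici_mem_atTop N), fun A hA => ?_⟩
  obtain ⟨I, hI, rfl⟩ := Finset.subset_set_image_iff.1 hA
  exact (hN I fun i hi => hI hi).le

theorem divTendsto_of_confFilterTendsto_map {x : ℕ → X} {p : X}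
    (hp : ConfFilterTendsto (genConf δ) (map x atTop) p) : DivTendsto δ x p := by
  intro ε hε
  obtain ⟨f, hf, hfA⟩ := confFilterTendsto_genConf_iff.1 hp (ε / 2) (half_pos hε)
  obtain ⟨N, hN⟩ := mem_atTop_sets.1 (mem_map.1 hf)
  refine ⟨N, fun I hI => (hfA _ ?_).trans_lt (half_lt_self hε)⟩
  rw [Finset.coe_image]
  exact image_subset_iff.2 fun i hi => hN i (hI i hi)

theorem ConfCauchyFilter.exists_antitone_seq {F : Filter X}
    (hF : ConfCauchyFilter (genConf δ) F) :
    ∃ s : ℕ → Set X, Antitone s ∧ (∀ n, s n ∈ F) ∧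
      ∀ ε > 0, ∃ n, ∀ A : Finset X, ↑A ⊆ s n → δ A ≤ ε := by
  choose t ht htδ using fun n : ℕ =>
    confCauchyFilter_genConf_iff.1 hF (1 / (n + 1)) Nat.one_div_pos_of_nat
  refine ⟨dissipate t, antitone_dissipate,
    fun n => (biInter_mem (finite_Iic n)).2 fun k _ => ht k, fun ε hε => ?_⟩
  obtain ⟨n, hn⟩ := exists_nat_one_div_lt hε
  exact ⟨n, fun A hA => (htδ n A (hA.trans (dissipate_subset le_rfl))).trans hn.le⟩

theorem divCauchy_of_antitone {s : ℕ → Set X} {x : ℕ → X} (hs : Antitone s)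
    (hsδ : ∀ ε > 0, ∃ n, ∀ A : Finset X, ↑A ⊆ s n → δ A ≤ ε) (hx : ∀ n, x n ∈ s n) :
    DivCauchy δ x := by
  intro ε hε
  obtain ⟨N, hN⟩ := hsδ (ε / 2) (half_pos hε)
  refine ⟨N, fun I hI => (hN _ ?_).trans_lt (half_lt_self hε)⟩
  rw [Finset.coe_image]
  exact image_subset_iff.2 fun i hi => hs (hI i hi) (hx i)

end GeneratedConformity

namespace Pseudodiversity

variable {X : Type*} [DecidableEq X] (d : Pseudodiversity X)

theorem le_pair_add_insert (p q : X) (A : Finset X) :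
    d.δ (insert p A) ≤ d.δ {p, q} + d.δ (insert q A) := by
  simpa only [Finset.insert_eq] using d.triangle {p} A {q} (Finset.singleton_nonempty q)

theorem confFilterTendsto_of_divTendsto {F : Filter X} {s : ℕ → Set X} {x : ℕ → X} {p : X}
    (hs : Antitone s) (hsF : ∀ n, s n ∈ F)
    (hsδ : ∀ ε > 0, ∃ n, ∀ A : Finset X, ↑A ⊆ s n → d.δ A ≤ ε) (hx : ∀ n, x n ∈ s n)
    (hp : DivTendsto d.δ x p) : ConfFilterTendsto (genConf d.δ) F p := by
  refine confFilterTendsto_genConf_iff.2 fun ε hε => ?_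
  obtain ⟨N₁, hN₁⟩ := hp (ε / 2) (half_pos hε)
  obtain ⟨N₂, hN₂⟩ := hsδ (ε / 2) (half_pos hε)
  refine ⟨s (max N₁ N₂), hsF _, fun A hA => ?_⟩
  have hpx : d.δ {p, x (max N₁ N₂)} < ε / 2 := by
    simpa using hN₁ {max N₁ N₂} (by simp)
  have hxA : d.δ (insert (x (max N₁ N₂)) A) ≤ ε / 2 := by
    refine hN₂ _ ?_
    rw [Finset.coe_insert]
    exact (insert_subset (hx _) hA).trans (hs (le_max_right N₁ N₂))
  linarith [d.le_pair_add_insert p (x (max N₁ N₂)) A]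

end Pseudodiversity

/-- A pseudodiversity is complete (every Cauchy sequence converges) if and only
if the conformity it generates is complete (every Cauchy filter converges). -/
theorem pseudodiversity_complete_iff_conformity_complete {X : Type*} [DecidableEq X]
    (δ : Pseudodiversity X) :
    (∀ x : ℕ → X, DivCauchy δ.δ x → ∃ p, DivTendsto δ.δ x p) ↔
    (∀ F : Filter X, F.NeBot → ConfCauchyFilter (genConf δ.δ) F →
      ∃ x, ConfFilterTendsto (genConf δ.δ) F x) := by
  constructor
  · intro hseq F _ hF
    obtain ⟨s, hs, hsF, hsδ⟩ := hF.exists_antitone_seq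
    choose x hx using fun n => F.nonempty_of_mem (hsF n)
    obtain ⟨p, hp⟩ := hseq x (divCauchy_of_antitone hs hsδ hx)
    exact ⟨p, δ.confFilterTendsto_of_divTendsto hs hsF hsδ hx hp⟩
  · intro hfil x hx
    obtain ⟨p, hp⟩ := hfil _ map_neBot hx.confCauchyFilter_map
    exact ⟨p, divTendsto_of_confFilterTendsto_map hp⟩
end
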